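/- Consider the deterministic single-player liquidation model: T > 0, x ∈ ℝ, Θ := (1,0) ∈ ℝ²; continuous coefficients η, λ : [0,T] → ℝ with η > 0 and λ ≥ 0, A : [0,T] → M₂(ℝ), B⁽¹⁾, B⁽²⁾ : [0,T] → ℝ², R : [0,T] → ℝ². For continuous ξ : [0,T] → ℝ set X^ξ(t) := x − ∫₀ᵗ ξ(s) ds and let S^ξ be the solution of (S^ξ)′ = −A S^ξ + B⁽¹⁾ ξ + B⁽²⁾ X^ξ + R with S^ξ(0) = 0, with cost J(ξ) := ∫₀ᵀ [η ξ² + ξ ⟨Θ, S^ξ⟩ + λ (X^ξ)²] dt; call ξ admissible if X^ξ(T) = 0. Suppose M : [0,T] → ℝ and 𝒫 : [0,T] → ℝ² are differentiable such that ξ* := (M − ⟨B⁽¹⁾, 𝒫⟩)/(2η) is admissible, 𝒫(T) = 0, −M′ = 2λ X* + ⟨B⁽²⁾, 𝒫⟩ + ⟨Θ, −A S* + B⁽¹⁾ ξ* + B⁽²⁾ X* + R⟩ and −𝒫′ = −Aᵀ 𝒫 + Θ ξ*, where X* := X^{ξ*} and S* := S^{ξ*}. Assume moreover there are constants a, b₁,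 b₂ ≥ 0, ρ̂, θ₁, θ₂, θ₃ > 0, η_min > 0, λ_min ≥ 0 such that for all t ∈ [0,T] and y ∈ ℝ²: ‖A(t) y‖ ≤ a ‖y‖, ⟨y, A(t) y⟩ ≥ ρ̂ ‖y‖², ‖B⁽¹⁾(t)‖ ≤ b₁, ‖B⁽²⁾(t)‖ ≤ b₂, η(t) ≥ η_min, λ(t) ≥ λ_min, and, with c := a²/(2θ₁ρ̂²) + 1/(2θ₂), both λ_min − (θ₁+θ₂)/2 − b₂² (1 + 1/θ₃) c ≥ 0 and η_min − (1+θ₃) b₁² c ≥ 0. Then J(ξ) ≥ J(ξ*) for every admissible ξ; that is, ξ* is optimal. -/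

import Mathlib

/-!
Write `ξ = ξ* + dξ`. The cost is quadratic, so `J(ξ) = J(ξ*) + J(dξ) + δJ`, where `J(dξ)` is the
cost of the variation `(dξ, dX, dS)`, which solves the state equations with `x = 0` and `R = 0`,
and `δJ` is the first variation at `ξ*`. The adjoint system is built so that `δJ` is the integral
of the derivative of `M dX + ⟨𝒫, dS⟩ + ⟨Θ, S*⟩ dX`, which vanishes at both ends; hence `δJ = 0`.

It remains to show that the round-trip cost `J(dξ)` is nonnegative. Integrating by parts turns the
cross term `∫ dξ ⟨Θ, dS⟩` into `∫ dX ⟨Θ, -A dS + u⟩` with `u = dξ B⁽¹⁾ + dX B⁽²⁾`. Young's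
inequality bounds this below by `-(θ₁ + θ₂)/2 dX² - ‖A dS‖²/(2θ₁) - ‖u‖²/(2θ₂)`; coercivity of `A`
gives the energy estimate `ρ̂² ∫ ‖dS‖² ≤ ∫ ‖u‖²`, and `‖u‖²` is controlled by `dξ²` and `dX²`.
The weak-interaction conditions say exactly that what is left is absorbed by `η dξ² + λ dX²`.
-/

open Matrix Set intervalIntegral MeasureTheory

section DotProduct

variable {ι : Type*} [Fintype ι]

theorem dotProduct_self_nonneg_real (v : ι → ℝ) : 0 ≤ v ⬝ᵥ v := by
  simpa using dotProduct_self_star_nonneg v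

theorem two_mul_dotProduct_le {θ : ℝ} (hθ : 0 < θ) (p q : ι → ℝ) :
    2 * (p ⬝ᵥ q) ≤ θ * (p ⬝ᵥ p) + q ⬝ᵥ q / θ := by
  have h := div_nonneg (dotProduct_self_nonneg_real (θ • p - q)) hθ.le
  have expand : (θ • p - q) ⬝ᵥ (θ • p - q) / θ = θ * (p ⬝ᵥ p) + q ⬝ᵥ q / θ - 2 * (p ⬝ᵥ q) := by
    simp only [sub_dotProduct, dotProduct_sub, smul_dotProduct, dotProduct_smul, smul_eq_mul,
      dotProduct_comm q p]
    field_simp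
    ring
  linarith

theorem add_dotProduct_add_self_le {θ : ℝ} (hθ : 0 < θ) (p q : ι → ℝ) :
    (p + q) ⬝ᵥ (p + q) ≤ (1 + θ) * (p ⬝ᵥ p) + (1 + 1 / θ) * (q ⬝ᵥ q) := by
  have h := two_mul_dotProduct_le hθ p q
  simp only [add_dotProduct, dotProduct_add, dotProduct_comm q p]
  linarith [show q ⬝ᵥ q / θ = 1 / θ * (q ⬝ᵥ q) by ring]

theorem neg_le_mul_dotProduct {θ z : ℝ} (hθ : 0 < θ) {Θ : ι → ℝ} (hΘ : Θ ⬝ᵥ Θ ≤ 1)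
    (q : ι → ℝ) : -(θ / 2 * z ^ 2 + q ⬝ᵥ q / (2 * θ)) ≤ z * (Θ ⬝ᵥ q) := by
  have h := two_mul_dotProduct_le hθ (-(z • Θ)) q
  simp only [neg_dotProduct, dotProduct_neg, smul_dotProduct, dotProduct_smul, smul_eq_mul] at h
  have hz : θ * (z * (z * (Θ ⬝ᵥ Θ))) ≤ θ * z ^ 2 := by
    have := mul_le_mul_of_nonneg_left hΘ (sq_nonneg z)
    nlinarith
  have : q ⬝ᵥ q / (2 * θ) = q ⬝ᵥ q / θ / 2 := by ring
  linarith

theorem smul_add_smul_dotProduct_self_le {θ b₁ b₂ : ℝ} (hθ : 0 < θ) {B₁ B₂ : ι → ℝ}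
    (hB₁ : B₁ ⬝ᵥ B₁ ≤ b₁ ^ 2) (hB₂ : B₂ ⬝ᵥ B₂ ≤ b₂ ^ 2) (w z : ℝ) :
    (w • B₁ + z • B₂) ⬝ᵥ (w • B₁ + z • B₂)
      ≤ (1 + θ) * b₁ ^ 2 * w ^ 2 + (1 + 1 / θ) * b₂ ^ 2 * z ^ 2 := by
  have h := add_dotProduct_add_self_le hθ (w • B₁) (z • B₂)
  simp only [smul_dotProduct, dotProduct_smul, smul_eq_mul] at h
  have h₁ : w * (w * (B₁ ⬝ᵥ B₁)) ≤ b₁ ^ 2 * w ^ 2 := by nlinarith [sq_nonneg w]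
  have h₂ : z * (z * (B₂ ⬝ᵥ B₂)) ≤ b₂ ^ 2 * z ^ 2 := by nlinarith [sq_nonneg z]
  have hθ' : 0 < 1 / θ := by positivity
  nlinarith

theorem weak_interaction_bound {ρ a b₁ b₂ θ₁ θ₂ θ₃ ηmin lammin c η lam w z : ℝ}
    (hρ : 0 < ρ) (hθ₁ : 0 < θ₁) (hθ₂ : 0 < θ₂) {Θ u v y : ι → ℝ} (hΘ : Θ ⬝ᵥ Θ ≤ 1)
    (hv : v ⬝ᵥ v ≤ a ^ 2 * (y ⬝ᵥ y))
    (hu : u ⬝ᵥ u ≤ (1 + θ₃) * b₁ ^ 2 * w ^ 2 + (1 + 1 / θ₃) * b₂ ^ 2 * z ^ 2)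
    (hη : ηmin ≤ η) (hlam : lammin ≤ lam) (hc : a ^ 2 / (2 * θ₁ * ρ ^ 2) + 1 / (2 * θ₂) ≤ c)
    (hcond1 : 0 ≤ lammin - (θ₁ + θ₂) / 2 - b₂ ^ 2 * (1 + 1 / θ₃) * c)
    (hcond2 : 0 ≤ ηmin - (1 + θ₃) * b₁ ^ 2 * c) :
    a ^ 2 / (2 * θ₁ * ρ ^ 2) * (u ⬝ᵥ u - ρ ^ 2 * (y ⬝ᵥ y))
      ≤ η * w ^ 2 + lam * z ^ 2 + z * (Θ ⬝ᵥ (-v + u)) := by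
  set k := a ^ 2 / (2 * θ₁ * ρ ^ 2)
  have hk : k * ρ ^ 2 = a ^ 2 / (2 * θ₁) := by simp only [k]; field_simp
  have hv' : v ⬝ᵥ v / (2 * θ₁) ≤ k * ρ ^ 2 * (y ⬝ᵥ y) := by
    rw [hk, div_mul_eq_mul_div, div_le_div_iff_of_pos_right (by positivity)]
    exact hv
  have hcross₁ := neg_le_mul_dotProduct (z := z) hθ₁ hΘ (-v)
  have hcross₂ := neg_le_mul_dotProduct (z := z) hθ₂ hΘ u
  rw [neg_dotProduct, dotProduct_neg, neg_neg] at hcross₁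
  have hU := dotProduct_self_nonneg_real u
  have hcU : (k + 1 / (2 * θ₂)) * (u ⬝ᵥ u) ≤ c * (u ⬝ᵥ u) := mul_le_mul_of_nonneg_right hc hU
  have hc0 : 0 ≤ c := le_trans (by positivity) hc
  have hcu := mul_le_mul_of_nonneg_left hu hc0
  have hw : ((1 + θ₃) * b₁ ^ 2 * c) * w ^ 2 ≤ η * w ^ 2 :=
    mul_le_mul_of_nonneg_right (by linarith) (sq_nonneg w)
  have hz : ((θ₁ + θ₂) / 2 + b₂ ^ 2 * (1 + 1 / θ₃) * c) * z ^ 2 ≤ lam * z ^ 2 :=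
    mul_le_mul_of_nonneg_right (by linarith) (sq_nonneg z)
  have hsplit : u ⬝ᵥ u / (2 * θ₂) = 1 / (2 * θ₂) * (u ⬝ᵥ u) := by ring
  rw [dotProduct_add, mul_add]
  nlinarith

end DotProduct

section Calculus

variable {ι : Type*} [Fintype ι] {s : Set ℝ}

@[fun_prop]
theorem ContinuousOn.dotProduct {f g : ℝ → ι → ℝ} (hf : ContinuousOn f s)
    (hg : ContinuousOn g s) : ContinuousOn (fun t => f t ⬝ᵥ g t) s :=
  (continuous_fst.dotProduct continuous_snd).comp_continuousOn (hf.prodMk hg)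

@[fun_prop]
theorem ContinuousOn.matrix_mulVec {A : ℝ → Matrix ι ι ℝ} {f : ℝ → ι → ℝ}
    (hA : ContinuousOn A s) (hf : ContinuousOn f s) : ContinuousOn (fun t => A t *ᵥ f t) s :=
  (continuous_fst.matrix_mulVec continuous_snd).comp_continuousOn (hA.prodMk hf)

theorem HasDerivWithinAt.dotProduct {f g : ℝ → ι → ℝ} {f' g' : ι → ℝ} {t : ℝ}
    (hf : HasDerivWithinAt f f' s t) (hg : HasDerivWithinAt g g' s t) :
    HasDerivWithinAt (fun τ => f τ ⬝ᵥ g τ) (f' ⬝ᵥ g t + f t ⬝ᵥ g') s t := by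
  have := HasDerivWithinAt.fun_sum (u := Finset.univ) fun i _ =>
    (hasDerivWithinAt_pi.1 hf i).fun_mul (hasDerivWithinAt_pi.1 hg i)
  rw [_root_.dotProduct, _root_.dotProduct, ← Finset.sum_add_distrib]
  exact this

theorem hasDerivWithinAt_of_eq_const_sub_integral {X f : ℝ → ℝ} {a b c : ℝ}
    (hX : ∀ t, X t = c - ∫ s in a..t, f s) (hf : ContinuousOn f (Icc a b)) :
    ∀ t ∈ Icc a b, HasDerivWithinAt X (-f t) (Icc a b) t := by
  intro t ht
  have := Fact.mk ht
  rw [funext hX]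
  refine (integral_hasDerivWithinAt_right ?_ ?_ (hf t ht)).const_sub c
  · exact (hf.mono (Icc_subset_Icc le_rfl ht.2)).intervalIntegrable_of_Icc ht.1
  · exact hf.stronglyMeasurableAtFilter_nhdsWithin measurableSet_Icc t

theorem integral_eq_sub_of_hasDerivWithinAt_Icc {E : Type*} [NormedAddCommGroup E]
    [NormedSpace ℝ E] [CompleteSpace E] {f f' : ℝ → E} {a b : ℝ} (hab : a ≤ b)
    (hf : ∀ t ∈ Icc a b, HasDerivWithinAt f (f' t) (Icc a b) t)
    (hf' : IntervalIntegrable f' volume a b) :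
    ∫ t in a..b, f' t = f b - f a :=
  integral_eq_sub_of_hasDerivAt_of_le hab (HasDerivWithinAt.continuousOn hf)
    (fun t ht => (hf t (Ioo_subset_Icc_self ht)).hasDerivAt (Icc_mem_nhds ht.1 ht.2)) hf'

end Calculus

section Energy

variable {ι : Type*} [Fintype ι]

theorem coercive_ode_energy_estimate {T ρ : ℝ} (hT : 0 ≤ T) (hρ : 0 < ρ)
    {A : ℝ → Matrix ι ι ℝ} {y u : ℝ → ι → ℝ}
    (hAc : ContinuousOn A (Icc 0 T)) (huc : ContinuousOn u (Icc 0 T))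
    (hcoer : ∀ t ∈ Icc 0 T, ∀ v : ι → ℝ, ρ * (v ⬝ᵥ v) ≤ v ⬝ᵥ (A t *ᵥ v))
    (hy0 : y 0 = 0)
    (hy : ∀ t ∈ Icc 0 T, HasDerivWithinAt y (-(A t *ᵥ y t) + u t) (Icc 0 T) t) :
    0 ≤ ∫ t in 0..T, (u t ⬝ᵥ u t - ρ ^ 2 * (y t ⬝ᵥ y t)) := by
  have hyc : ContinuousOn y (Icc 0 T) := HasDerivWithinAt.continuousOn hy
  set y' := fun t => -(A t *ᵥ y t) + u t
  have henergy : ∫ t in 0..T, (y' t ⬝ᵥ y t + y t ⬝ᵥ y' t) = y T ⬝ᵥ y T := by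
    rw [integral_eq_sub_of_hasDerivWithinAt_Icc hT (fun t ht => (hy t ht).dotProduct (hy t ht))
      (ContinuousOn.intervalIntegrable_of_Icc hT (by fun_prop)), hy0, dotProduct_zero, sub_zero]
  have hdissip : ∀ t ∈ Icc 0 T,
      y' t ⬝ᵥ y t + y t ⬝ᵥ y' t ≤ (u t ⬝ᵥ u t - ρ ^ 2 * (y t ⬝ᵥ y t)) / ρ := by
    intro t ht
    have hyu := two_mul_dotProduct_le hρ (y t) (u t)
    have hAy := hcoer t ht (y t)
    have : (u t ⬝ᵥ u t - ρ ^ 2 * (y t ⬝ᵥ y t)) / ρ = u t ⬝ᵥ u t / ρ - ρ * (y t ⬝ᵥ y t) := by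
      field_simp
    simp only [y', dotProduct_comm _ (y t), dotProduct_add, dotProduct_neg]
    linarith
  have hmono := integral_mono_on (μ := volume) hT
    (ContinuousOn.intervalIntegrable_of_Icc hT (by fun_prop))
    (ContinuousOn.intervalIntegrable_of_Icc hT (by fun_prop)) hdissip
  rw [henergy, intervalIntegral.integral_div] at hmono
  have h := (dotProduct_self_nonneg_real _).trans hmono
  rwa [le_div_iff₀ hρ, zero_mul] at h

end Energy

section Liquidation

variable {ι : Type*} [Fintype ι]

noncomputable def liquidationCost (T : ℝ) (η lam : ℝ → ℝ) (Θ : ι → ℝ) (ξ X : ℝ → ℝ)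
    (S : ℝ → ι → ℝ) : ℝ :=
  ∫ t in 0..T, (η t * ξ t ^ 2 + ξ t * (Θ ⬝ᵥ S t) + lam t * X t ^ 2)

noncomputable def liquidationCostFirstVariation (T : ℝ) (η lam : ℝ → ℝ) (Θ : ι → ℝ)
    (ξ₀ X₀ : ℝ → ℝ) (S₀ : ℝ → ι → ℝ) (dξ dX : ℝ → ℝ) (dS : ℝ → ι → ℝ) : ℝ :=
  ∫ t in 0..T, (2 * η t * ξ₀ t * dξ t + dξ t * (Θ ⬝ᵥ S₀ t) + ξ₀ t * (Θ ⬝ᵥ dS t)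
    + 2 * lam t * X₀ t * dX t)

variable {T : ℝ} {Θ : ι → ℝ} {η lam : ℝ → ℝ} {A : ℝ → Matrix ι ι ℝ} {B₁ B₂ : ℝ → ι → ℝ}

theorem liquidationCost_eq_add {ξ X ξ₀ X₀ : ℝ → ℝ} {S S₀ : ℝ → ι → ℝ} (hT : 0 ≤ T)
    (hηc : ContinuousOn η (Icc 0 T)) (hlamc : ContinuousOn lam (Icc 0 T))
    (hξc : ContinuousOn ξ (Icc 0 T)) (hXc : ContinuousOn X (Icc 0 T))
    (hSc : ContinuousOn S (Icc 0 T)) (hξ₀c : ContinuousOn ξ₀ (Icc 0 T))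
    (hX₀c : ContinuousOn X₀ (Icc 0 T)) (hS₀c : ContinuousOn S₀ (Icc 0 T)) :
    liquidationCost T η lam Θ ξ X S = liquidationCost T η lam Θ ξ₀ X₀ S₀
      + liquidationCost T η lam Θ (ξ - ξ₀) (X - X₀) (S - S₀)
      + liquidationCostFirstVariation T η lam Θ ξ₀ X₀ S₀ (ξ - ξ₀) (X - X₀) (S - S₀) := by
  have hint {f : ℝ → ℝ} (hf : ContinuousOn f (Icc 0 T)) : IntervalIntegrable f volume 0 T :=
    hf.intervalIntegrable_of_Icc hT
  simp only [liquidationCost, liquidationCostFirstVariation, Pi.sub_apply]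
  rw [← integral_add (hint (by fun_prop)) (hint (by fun_prop)),
    ← integral_add (hint (by fun_prop)) (hint (by fun_prop))]
  exact integral_congr fun t _ => by simp only [dotProduct_sub]; ring

theorem hasDerivWithinAt_sub_of_state_eq {s : Set ℝ} {t : ℝ} {M : Matrix ι ι ℝ}
    {b₁ b₂ r : ι → ℝ} {ξ X ξ₀ X₀ : ℝ → ℝ} {S S₀ : ℝ → ι → ℝ}
    (hS : HasDerivWithinAt S (-(M *ᵥ S t) + ξ t • b₁ + X t • b₂ + r) s t)
    (hS₀ : HasDerivWithinAt S₀ (-(M *ᵥ S₀ t) + ξ₀ t • b₁ + X₀ t • b₂ + r) s t) :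
    HasDerivWithinAt (S - S₀) (-(M *ᵥ (S - S₀) t) + ((ξ - ξ₀) t • b₁ + (X - X₀) t • b₂)) s t :=
  (hS.sub hS₀).congr_deriv (by simp only [Pi.sub_apply, mulVec_sub, sub_smul]; abel)

variable {dξ dX : ℝ → ℝ} {dS : ℝ → ι → ℝ}

theorem liquidationCost_nonneg_of_weak_interaction {ρ a b₁ b₂ θ₁ θ₂ θ₃ ηmin lammin c : ℝ}
    (hT : 0 ≤ T) (hρ : 0 < ρ) (hθ₁ : 0 < θ₁) (hθ₂ : 0 < θ₂) (hθ₃ : 0 < θ₃) (hΘ : Θ ⬝ᵥ Θ ≤ 1)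
    (hηc : ContinuousOn η (Icc 0 T)) (hlamc : ContinuousOn lam (Icc 0 T))
    (hAc : ContinuousOn A (Icc 0 T)) (hB₁c : ContinuousOn B₁ (Icc 0 T))
    (hB₂c : ContinuousOn B₂ (Icc 0 T))
    (hAbound : ∀ t ∈ Icc 0 T, ∀ y : ι → ℝ, (A t *ᵥ y) ⬝ᵥ (A t *ᵥ y) ≤ a ^ 2 * (y ⬝ᵥ y))
    (hAcoer : ∀ t ∈ Icc 0 T, ∀ y : ι → ℝ, ρ * (y ⬝ᵥ y) ≤ y ⬝ᵥ (A t *ᵥ y))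
    (hB₁bound : ∀ t ∈ Icc 0 T, B₁ t ⬝ᵥ B₁ t ≤ b₁ ^ 2)
    (hB₂bound : ∀ t ∈ Icc 0 T, B₂ t ⬝ᵥ B₂ t ≤ b₂ ^ 2)
    (hηlb : ∀ t ∈ Icc 0 T, ηmin ≤ η t) (hlamlb : ∀ t ∈ Icc 0 T, lammin ≤ lam t)
    (hc : a ^ 2 / (2 * θ₁ * ρ ^ 2) + 1 / (2 * θ₂) ≤ c)
    (hcond1 : 0 ≤ lammin - (θ₁ + θ₂) / 2 - b₂ ^ 2 * (1 + 1 / θ₃) * c)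
    (hcond2 : 0 ≤ ηmin - (1 + θ₃) * b₁ ^ 2 * c)
    (hdξc : ContinuousOn dξ (Icc 0 T))
    (hdX : ∀ t ∈ Icc 0 T, HasDerivWithinAt dX (-dξ t) (Icc 0 T) t)
    (hdX0 : dX 0 = 0) (hdXT : dX T = 0)
    (hdS : ∀ t ∈ Icc 0 T, HasDerivWithinAt dS
      (-(A t *ᵥ dS t) + (dξ t • B₁ t + dX t • B₂ t)) (Icc 0 T) t)
    (hdS0 : dS 0 = 0) :
    0 ≤ liquidationCost T η lam Θ dξ dX dS := by
  have hdXc : ContinuousOn dX (Icc 0 T) := HasDerivWithinAt.continuousOn hdX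
  have hdSc : ContinuousOn dS (Icc 0 T) := HasDerivWithinAt.continuousOn hdS
  have hint {f : ℝ → ℝ} (hf : ContinuousOn f (Icc 0 T)) : IntervalIntegrable f volume 0 T :=
    hf.intervalIntegrable_of_Icc hT
  set u := fun t => dξ t • B₁ t + dX t • B₂ t
  set k := a ^ 2 / (2 * θ₁ * ρ ^ 2)
  -- the integrand is the derivative of `dX * ⟨Θ, dS⟩`, which vanishes at `0` and `T`
  have hparts :
      ∫ t in 0..T, (-dξ t * (Θ ⬝ᵥ dS t) + dX t * (Θ ⬝ᵥ (-(A t *ᵥ dS t) + u t))) = 0 := by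
    have hΘdS : ∀ t ∈ uIcc 0 T, HasDerivWithinAt (fun t => Θ ⬝ᵥ dS t)
        (Θ ⬝ᵥ (-(A t *ᵥ dS t) + u t)) (uIcc 0 T) t := by
      rw [uIcc_of_le hT]
      intro t ht
      simpa [u] using (hasDerivWithinAt_const t _ Θ).dotProduct (hdS t ht)
    rw [integral_deriv_mul_eq_sub_of_hasDerivWithinAt (by rwa [uIcc_of_le hT]) hΘdS
      (hint (by fun_prop)) (hint (by fun_prop)), hdX0, hdXT, zero_mul, zero_mul, sub_zero]
  have hpointwise : ∀ t ∈ Icc 0 T, k * (u t ⬝ᵥ u t - ρ ^ 2 * (dS t ⬝ᵥ dS t))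
      ≤ η t * dξ t ^ 2 + lam t * dX t ^ 2 + dX t * (Θ ⬝ᵥ (-(A t *ᵥ dS t) + u t)) := fun t ht =>
    weak_interaction_bound hρ hθ₁ hθ₂ hΘ (hAbound t ht (dS t))
      (smul_add_smul_dotProduct_self_le hθ₃ (hB₁bound t ht) (hB₂bound t ht) _ _)
      (hηlb t ht) (hlamlb t ht) hc hcond1 hcond2
  calc 0 ≤ k * ∫ t in 0..T, (u t ⬝ᵥ u t - ρ ^ 2 * (dS t ⬝ᵥ dS t)) :=
        mul_nonneg (by positivity)
          (coercive_ode_energy_estimate hT hρ hAc (by fun_prop) hAcoer hdS0 hdS)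
    _ = ∫ t in 0..T, k * (u t ⬝ᵥ u t - ρ ^ 2 * (dS t ⬝ᵥ dS t)) :=
        (intervalIntegral.integral_const_mul _ _).symm
    _ ≤ ∫ t in 0..T, (η t * dξ t ^ 2 + lam t * dX t ^ 2
          + dX t * (Θ ⬝ᵥ (-(A t *ᵥ dS t) + u t))) :=
        integral_mono_on hT (hint (by fun_prop)) (hint (by fun_prop)) hpointwise
    _ = ∫ t in 0..T, ((η t * dξ t ^ 2 + dξ t * (Θ ⬝ᵥ dS t) + lam t * dX t ^ 2)
          + (-dξ t * (Θ ⬝ᵥ dS t) + dX t * (Θ ⬝ᵥ (-(A t *ᵥ dS t) + u t)))) :=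
        integral_congr fun t _ => by ring
    _ = liquidationCost T η lam Θ dξ dX dS := by
        rw [integral_add (hint (by fun_prop)) (hint (by fun_prop)), hparts, add_zero]
        rfl

theorem liquidationCostFirstVariation_eq_zero {M ξ₀ X₀ : ℝ → ℝ} {P S₀ S' : ℝ → ι → ℝ}
    (hT : 0 ≤ T) (hηc : ContinuousOn η (Icc 0 T)) (hlamc : ContinuousOn lam (Icc 0 T))
    (hξ₀c : ContinuousOn ξ₀ (Icc 0 T))
    (hMξ : ∀ t ∈ Icc 0 T, M t = 2 * η t * ξ₀ t + B₁ t ⬝ᵥ P t)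
    (hX₀ : ∀ t ∈ Icc 0 T, HasDerivWithinAt X₀ (-ξ₀ t) (Icc 0 T) t)
    (hS₀ : ∀ t ∈ Icc 0 T, HasDerivWithinAt S₀ (S' t) (Icc 0 T) t)
    (hM : ∀ t ∈ Icc 0 T, HasDerivWithinAt M
      (-(2 * lam t * X₀ t + B₂ t ⬝ᵥ P t + Θ ⬝ᵥ S' t)) (Icc 0 T) t)
    (hP : ∀ t ∈ Icc 0 T, HasDerivWithinAt P (-(-((A t)ᵀ *ᵥ P t) + ξ₀ t • Θ)) (Icc 0 T) t)
    (hPT : P T = 0)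
    (hdξc : ContinuousOn dξ (Icc 0 T))
    (hdX : ∀ t ∈ Icc 0 T, HasDerivWithinAt dX (-dξ t) (Icc 0 T) t)
    (hdX0 : dX 0 = 0) (hdXT : dX T = 0)
    (hdS : ∀ t ∈ Icc 0 T, HasDerivWithinAt dS
      (-(A t *ᵥ dS t) + (dξ t • B₁ t + dX t • B₂ t)) (Icc 0 T) t)
    (hdS0 : dS 0 = 0) :
    liquidationCostFirstVariation T η lam Θ ξ₀ X₀ S₀ dξ dX dS = 0 := by
  have hX₀c : ContinuousOn X₀ (Icc 0 T) := HasDerivWithinAt.continuousOn hX₀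
  have hS₀c : ContinuousOn S₀ (Icc 0 T) := HasDerivWithinAt.continuousOn hS₀
  have hdXc : ContinuousOn dX (Icc 0 T) := HasDerivWithinAt.continuousOn hdX
  have hdSc : ContinuousOn dS (Icc 0 T) := HasDerivWithinAt.continuousOn hdS
  have hG : ∀ t ∈ Icc 0 T, HasDerivWithinAt
      (fun t => M t * dX t + P t ⬝ᵥ dS t + (Θ ⬝ᵥ S₀ t) * dX t)
      (-(2 * η t * ξ₀ t * dξ t + dξ t * (Θ ⬝ᵥ S₀ t)
        + ξ₀ t * (Θ ⬝ᵥ dS t) + 2 * lam t * X₀ t * dX t)) (Icc 0 T) t := by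
    intro t ht
    refine ((((hM t ht).mul (hdX t ht)).add ((hP t ht).dotProduct (hdS t ht))).add
      (((hasDerivWithinAt_const t _ Θ).dotProduct (hS₀ t ht)).mul (hdX t ht))).congr_deriv ?_
    rw [hMξ t ht]
    simp only [dotProduct_add, add_dotProduct, dotProduct_neg, neg_dotProduct, dotProduct_smul,
      smul_dotProduct, smul_eq_mul, zero_dotProduct, mulVec_transpose, ← dotProduct_mulVec,
      dotProduct_comm (B₁ t), dotProduct_comm (B₂ t), dotProduct_comm Θ]
    ring
  have h := integral_eq_sub_of_hasDerivWithinAt_Icc hT hG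
    ((ContinuousOn.intervalIntegrable_of_Icc hT (by fun_prop)))
  rw [intervalIntegral.integral_neg, hdX0, hdXT, hPT, hdS0] at h
  simpa [liquidationCostFirstVariation] using h

end Liquidation

theorem liquidation_verification_optimality_general
    (T x : ℝ) (hT : 0 < T)
    (Θ : Fin 2 → ℝ) (hΘ : Θ = ![1, 0])
    (η lam : ℝ → ℝ) (A : ℝ → Matrix (Fin 2) (Fin 2) ℝ)
    (B₁ B₂ R : ℝ → (Fin 2 → ℝ))
    (hηc : ContinuousOn η (Set.Icc 0 T)) (hlamc : ContinuousOn lam (Set.Icc 0 T))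
    (hAc : ContinuousOn A (Set.Icc 0 T))
    (hB₁c : ContinuousOn B₁ (Set.Icc 0 T)) (hB₂c : ContinuousOn B₂ (Set.Icc 0 T))
    (hηpos : ∀ t ∈ Set.Icc (0 : ℝ) T, 0 < η t)
    -- the candidate strategy and its adjoint system
    (M : ℝ → ℝ) (Padj : ℝ → (Fin 2 → ℝ)) (ξstar : ℝ → ℝ)
    (hξstar : ∀ t, ξstar t = (M t - B₁ t ⬝ᵥ Padj t) / (2 * η t))
    (Xstar : ℝ → ℝ) (Sstar : ℝ → (Fin 2 → ℝ))
    (hXstar : ∀ t, Xstar t = x - ∫ s in (0:ℝ)..t, ξstar s)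
    (hSstar0 : Sstar 0 = 0)
    (hSstar : ∀ t ∈ Set.Icc (0 : ℝ) T,
      HasDerivWithinAt Sstar
        (-(A t *ᵥ Sstar t) + ξstar t • B₁ t + Xstar t • B₂ t + R t)
        (Set.Icc (0 : ℝ) T) t)
    (hadmstar : Xstar T = 0)
    (hPadjT : Padj T = 0)
    (hM : ∀ t ∈ Set.Icc (0 : ℝ) T,
      HasDerivWithinAt M
        (-(2 * lam t * Xstar t + B₂ t ⬝ᵥ Padj t
          + Θ ⬝ᵥ (-(A t *ᵥ Sstar t) + ξstar t • B₁ t + Xstar t • B₂ t + R t)))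
        (Set.Icc (0 : ℝ) T) t)
    (hPadj : ∀ t ∈ Set.Icc (0 : ℝ) T,
      HasDerivWithinAt Padj (-(-((A t)ᵀ *ᵥ Padj t) + ξstar t • Θ))
        (Set.Icc (0 : ℝ) T) t)
    -- weak-interaction constants and bounds
    (a b₁ b₂ ρhat θ₁ θ₂ θ₃ ηmin lammin c : ℝ)
    (hρ : 0 < ρhat) (hθ₁ : 0 < θ₁) (hθ₂ : 0 < θ₂) (hθ₃ : 0 < θ₃)
    (hAbound : ∀ t ∈ Set.Icc (0 : ℝ) T, ∀ y : Fin 2 → ℝ,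
      (A t *ᵥ y) ⬝ᵥ (A t *ᵥ y) ≤ a ^ 2 * (y ⬝ᵥ y))
    (hAcoer : ∀ t ∈ Set.Icc (0 : ℝ) T, ∀ y : Fin 2 → ℝ,
      ρhat * (y ⬝ᵥ y) ≤ y ⬝ᵥ (A t *ᵥ y))
    (hB₁bound : ∀ t ∈ Set.Icc (0 : ℝ) T, B₁ t ⬝ᵥ B₁ t ≤ b₁ ^ 2)
    (hB₂bound : ∀ t ∈ Set.Icc (0 : ℝ) T, B₂ t ⬝ᵥ B₂ t ≤ b₂ ^ 2)
    (hηlb : ∀ t ∈ Set.Icc (0 : ℝ) T, ηmin ≤ η t)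
    (hlamlb : ∀ t ∈ Set.Icc (0 : ℝ) T, lammin ≤ lam t)
    (hc : c = a ^ 2 / (2 * θ₁ * ρhat ^ 2) + 1 / (2 * θ₂))
    (hcond1 : 0 ≤ lammin - (θ₁ + θ₂) / 2 - b₂ ^ 2 * (1 + 1 / θ₃) * c)
    (hcond2 : 0 ≤ ηmin - (1 + θ₃) * b₁ ^ 2 * c) :
    -- conclusion: optimality of ξ* among admissible strategies
    ∀ (ξ Xξ : ℝ → ℝ) (Sξ : ℝ → (Fin 2 → ℝ)),
      ContinuousOn ξ (Set.Icc 0 T) →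
      (∀ t, Xξ t = x - ∫ s in (0:ℝ)..t, ξ s) →
      Sξ 0 = 0 →
      (∀ t ∈ Set.Icc (0 : ℝ) T,
        HasDerivWithinAt Sξ
          (-(A t *ᵥ Sξ t) + ξ t • B₁ t + Xξ t • B₂ t + R t)
          (Set.Icc (0 : ℝ) T) t) →
      Xξ T = 0 →
      (∫ t in (0:ℝ)..T,
          (η t * (ξstar t) ^ 2 + ξstar t * (Θ ⬝ᵥ Sstar t)
            + lam t * (Xstar t) ^ 2))
        ≤ ∫ t in (0:ℝ)..T,
            (η t * (ξ t) ^ 2 + ξ t * (Θ ⬝ᵥ Sξ t) + lam t * (Xξ t) ^ 2) := by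
  intro ξ Xξ Sξ hξc hXξ hSξ0 hSξ hadm
  have hΘ1 : Θ ⬝ᵥ Θ ≤ 1 := by simp [hΘ, dotProduct, Fin.sum_univ_two]
  have hξstarc : ContinuousOn ξstar (Icc 0 T) := by
    have hMc := HasDerivWithinAt.continuousOn hM
    have hPc := HasDerivWithinAt.continuousOn hPadj
    rw [funext hξstar]
    exact ContinuousOn.div (by fun_prop) (by fun_prop) fun t ht => by
      have := hηpos t ht; positivity
  have hMξ : ∀ t ∈ Icc 0 T, M t = 2 * η t * ξstar t + B₁ t ⬝ᵥ Padj t := fun t ht => by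
    have := (hηpos t ht).ne'
    rw [hξstar]; field_simp; ring
  have hXξd := hasDerivWithinAt_of_eq_const_sub_integral hXξ hξc
  have hXstard := hasDerivWithinAt_of_eq_const_sub_integral hXstar hξstarc
  have hdX : ∀ t ∈ Icc 0 T, HasDerivWithinAt (Xξ - Xstar) (-(ξ - ξstar) t) (Icc 0 T) t :=
    fun t ht => ((hXξd t ht).sub (hXstard t ht)).congr_deriv (by simp only [Pi.sub_apply]; ring)
  have hdS t ht := hasDerivWithinAt_sub_of_state_eq (hSξ t ht) (hSstar t ht)
  have hdX0 : (Xξ - Xstar) 0 = 0 := by simp [hXξ, hXstar]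
  have hdXT : (Xξ - Xstar) T = 0 := by simp [hadm, hadmstar]
  have hdS0 : (Sξ - Sstar) 0 = 0 := by simp [hSξ0, hSstar0]
  have hround := liquidationCost_nonneg_of_weak_interaction hT.le hρ hθ₁ hθ₂ hθ₃ hΘ1 hηc hlamc
    hAc hB₁c hB₂c hAbound hAcoer hB₁bound hB₂bound hηlb hlamlb hc.ge hcond1 hcond2
    (hξc.sub hξstarc) hdX hdX0 hdXT hdS hdS0
  have hfirst := liquidationCostFirstVariation_eq_zero hT.le hηc hlamc hξstarc hMξ hXstard
    hSstar hM hPadj hPadjT (hξc.sub hξstarc) hdX hdX0 hdXT hdS hdS0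
  change liquidationCost T η lam Θ ξstar Xstar Sstar ≤ liquidationCost T η lam Θ ξ Xξ Sξ
  rw [liquidationCost_eq_add hT.le hηc hlamc hξc (HasDerivWithinAt.continuousOn hXξd)
    (HasDerivWithinAt.continuousOn hSξ) hξstarc (HasDerivWithinAt.continuousOn hXstard)
    (HasDerivWithinAt.continuousOn hSstar), hfirst]
  linarith

/-- Verification theorem for the deterministic single-player liquidation model
(sufficient maximum principle without convexity): under the weak-interaction
conditions on the impact coefficients, the candidate strategy `ξ*` obtained
from the forward–backward system is optimal among all admissible strategies. -/
theorem liquidation_verification_optimality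
    (T x : ℝ) (hT : 0 < T)
    (Θ : Fin 2 → ℝ) (hΘ : Θ = ![1, 0])
    (η lam : ℝ → ℝ) (A : ℝ → Matrix (Fin 2) (Fin 2) ℝ)
    (B₁ B₂ R : ℝ → (Fin 2 → ℝ))
    (hηc : ContinuousOn η (Set.Icc 0 T)) (hlamc : ContinuousOn lam (Set.Icc 0 T))
    (hAc : ContinuousOn A (Set.Icc 0 T))
    (hB₁c : ContinuousOn B₁ (Set.Icc 0 T)) (hB₂c : ContinuousOn B₂ (Set.Icc 0 T))
    (hRc : ContinuousOn R (Set.Icc 0 T))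
    (hηpos : ∀ t ∈ Set.Icc (0 : ℝ) T, 0 < η t)
    (hlamnonneg : ∀ t ∈ Set.Icc (0 : ℝ) T, 0 ≤ lam t)
    -- the candidate strategy and its adjoint system
    (M : ℝ → ℝ) (Padj : ℝ → (Fin 2 → ℝ)) (ξstar : ℝ → ℝ)
    (hξstar : ∀ t, ξstar t = (M t - B₁ t ⬝ᵥ Padj t) / (2 * η t))
    (Xstar : ℝ → ℝ) (Sstar : ℝ → (Fin 2 → ℝ))
    (hXstar : ∀ t, Xstar t = x - ∫ s in (0:ℝ)..t, ξstar s)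
    (hSstar0 : Sstar 0 = 0)
    (hSstar : ∀ t ∈ Set.Icc (0 : ℝ) T,
      HasDerivWithinAt Sstar
        (-(A t *ᵥ Sstar t) + ξstar t • B₁ t + Xstar t • B₂ t + R t)
        (Set.Icc (0 : ℝ) T) t)
    (hadmstar : Xstar T = 0)
    (hPadjT : Padj T = 0)
    (hM : ∀ t ∈ Set.Icc (0 : ℝ) T,
      HasDerivWithinAt M
        (-(2 * lam t * Xstar t + B₂ t ⬝ᵥ Padj t
          + Θ ⬝ᵥ (-(A t *ᵥ Sstar t) + ξstar t • B₁ t + Xstar t • B₂ t + R t)))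
        (Set.Icc (0 : ℝ) T) t)
    (hPadj : ∀ t ∈ Set.Icc (0 : ℝ) T,
      HasDerivWithinAt Padj (-(-((A t)ᵀ *ᵥ Padj t) + ξstar t • Θ))
        (Set.Icc (0 : ℝ) T) t)
    -- weak-interaction constants and bounds
    (a b₁ b₂ ρhat θ₁ θ₂ θ₃ ηmin lammin c : ℝ)
    (ha : 0 ≤ a) (hb₁ : 0 ≤ b₁) (hb₂ : 0 ≤ b₂)
    (hρ : 0 < ρhat) (hθ₁ : 0 < θ₁) (hθ₂ : 0 < θ₂) (hθ₃ : 0 < θ₃)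
    (hηmin : 0 < ηmin) (hlammin : 0 ≤ lammin)
    (hAbound : ∀ t ∈ Set.Icc (0 : ℝ) T, ∀ y : Fin 2 → ℝ,
      (A t *ᵥ y) ⬝ᵥ (A t *ᵥ y) ≤ a ^ 2 * (y ⬝ᵥ y))
    (hAcoer : ∀ t ∈ Set.Icc (0 : ℝ) T, ∀ y : Fin 2 → ℝ,
      ρhat * (y ⬝ᵥ y) ≤ y ⬝ᵥ (A t *ᵥ y))
    (hB₁bound : ∀ t ∈ Set.Icc (0 : ℝ) T, B₁ t ⬝ᵥ B₁ t ≤ b₁ ^ 2)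
    (hB₂bound : ∀ t ∈ Set.Icc (0 : ℝ) T, B₂ t ⬝ᵥ B₂ t ≤ b₂ ^ 2)
    (hηlb : ∀ t ∈ Set.Icc (0 : ℝ) T, ηmin ≤ η t)
    (hlamlb : ∀ t ∈ Set.Icc (0 : ℝ) T, lammin ≤ lam t)
    (hc : c = a ^ 2 / (2 * θ₁ * ρhat ^ 2) + 1 / (2 * θ₂))
    (hcond1 : 0 ≤ lammin - (θ₁ + θ₂) / 2 - b₂ ^ 2 * (1 + 1 / θ₃) * c)
    (hcond2 : 0 ≤ ηmin - (1 + θ₃) * b₁ ^ 2 * c) :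
    -- conclusion: optimality of ξ* among admissible strategies
    ∀ (ξ Xξ : ℝ → ℝ) (Sξ : ℝ → (Fin 2 → ℝ)),
      ContinuousOn ξ (Set.Icc 0 T) →
      (∀ t, Xξ t = x - ∫ s in (0:ℝ)..t, ξ s) →
      Sξ 0 = 0 →
      (∀ t ∈ Set.Icc (0 : ℝ) T,
        HasDerivWithinAt Sξ
          (-(A t *ᵥ Sξ t) + ξ t • B₁ t + Xξ t • B₂ t + R t)
          (Set.Icc (0 : ℝ) T) t) →
      Xξ T = 0 →
      (∫ t in (0:ℝ)..T,
          (η t * (ξstar t) ^ 2 + ξstar t * (Θ ⬝ᵥ Sstar t)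
            + lam t * (Xstar t) ^ 2))
        ≤ ∫ t in (0:ℝ)..T,
            (η t * (ξ t) ^ 2 + ξ t * (Θ ⬝ᵥ Sξ t) + lam t * (Xξ t) ^ 2) :=
  liquidation_verification_optimality_general T x hT Θ hΘ η lam A B₁ B₂ R hηc hlamc hAc hB₁c hB₂c
    hηpos M Padj ξstar hξstar Xstar Sstar hXstar hSstar0 hSstar hadmstar hPadjT hM hPadj a b₁ b₂
    ρhat θ₁ θ₂ θ₃ ηmin lammin c hρ hθ₁ hθ₂ hθ₃ hAbound hAcoer hB₁bound hB₂bound hηlb hlamlb hc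
    hcond1 hcond2
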